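/- arXiv:2305.08273 — 4 statements merged into one kernel-verified Lean document; each statement's English description precedes it below -/
import Mathlib

section
/- Edge-insertion update. Let u ≠ v be nodes with w(u,v) = 0, let ω > 0 be an inserted edge weight, and let w′ be the symmetric weight matrix equal to w except w′(u,v) = w′(v,u) = ω. Define the modified degree function d′ by d′(u) = d(u) + ω and d′(j) = d(j) for j ≠ u (only u's degree is updated at this step). Suppose the invariant property holds at node u with respect to (w, d). Define r′(u) = r(u) + γ·ω·π̂(v)/(γ₀·(d(u)+ω)^β·d(v)^{1−β}) + (π̂(u) + γ₀·r(u) − γ₀·x(u))·(d(u)^β − (d(u)+ω)^β)/(γ₀·(d(u)+ω)^β), with r′(j) = r(j) for j ≠ u and π̂ unchanged. Then the invariant property holds at node u with respect to (w′, d′) for (π̂, r′, x). -/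
open Finset

/-- Weighted degree of node `i`. -/
noncomputable def deg {n : ℕ} (w : Fin n → Fin n → ℝ) (i : Fin n) : ℝ := ∑ j, w i j

/-- The invariant property at node `i` with respect to the weight matrix `w`
and the degree function `δ`:
`πh(i) + γ₀ r(i) = γ₀ x(i) + ∑_j γ w(i,j) πh(j) / (δ(i)^β δ(j)^(1-β))`. -/
noncomputable def invariantAt {n : ℕ} (w : Fin n → Fin n → ℝ) (δ : Fin n → ℝ)
    (β γ₀ γ : ℝ) (πh r x : Fin n → ℝ) (i : Fin n) : Prop :=
  πh i + γ₀ * r i =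
    γ₀ * x i + ∑ j, γ * w i j * πh j / (δ i ^ β * δ j ^ ((1 : ℝ) - β))

/-- Edge-insertion update: after inserting the edge `(u,v)` with weight `ω`
(updating only node `u`'s degree) and adjusting the residual at `u` as stated,
the invariant property is restored at node `u`. -/
theorem edge_insertion_update {n : ℕ} (hn : 1 ≤ n) (w : Fin n → Fin n → ℝ)
    (hsym : ∀ i j, w i j = w j i) (hnn : ∀ i j, 0 ≤ w i j)
    (hdiag : ∀ i, w i i = 0) (hd : ∀ i, 0 < deg w i)
    (β γ₀ γ : ℝ) (hβ0 : 0 ≤ β) (hβ1 : β ≤ 1) (hγ₀ : γ₀ ≠ 0)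
    (πh r x : Fin n → ℝ)
    (u v : Fin n) (huv : u ≠ v) (h0 : w u v = 0) (ω : ℝ) (hω : 0 < ω)
    (w' : Fin n → Fin n → ℝ)
    (hw' : ∀ i j, w' i j = if (i = u ∧ j = v) ∨ (i = v ∧ j = u) then ω else w i j)
    (d' : Fin n → ℝ) (hd'u : d' u = deg w u + ω)
    (hd'j : ∀ j, j ≠ u → d' j = deg w j)
    (hinv : invariantAt w (deg w) β γ₀ γ πh r x u)
    (r' : Fin n → ℝ)
    (hr'u : r' u = r u
        + γ * ω * πh v / (γ₀ * (deg w u + ω) ^ β * deg w v ^ ((1 : ℝ) - β))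
        + (πh u + γ₀ * r u - γ₀ * x u) * (deg w u ^ β - (deg w u + ω) ^ β)
            / (γ₀ * (deg w u + ω) ^ β))
    (hr'j : ∀ j, j ≠ u → r' j = r j) :
    invariantAt w' d' β γ₀ γ πh r' x u := by
  unfold invariantAt at hinv ⊢
  have hD : (0:ℝ) < deg w u := hd u
  have hD' : (0:ℝ) < deg w u + ω := by linarith
  have hpD : (0:ℝ) < deg w u ^ β := Real.rpow_pos_of_pos hD β
  have hpD' : (0:ℝ) < (deg w u + ω) ^ β := Real.rpow_pos_of_pos hD' β
  have hpv : (0:ℝ) < deg w v ^ ((1:ℝ) - β) := Real.rpow_pos_of_pos (hd v) _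
  have hsum : ∀ j, γ * w' u j * πh j / (d' u ^ β * d' j ^ ((1:ℝ) - β))
      = γ * w u j * πh j / ((deg w u + ω) ^ β * deg w j ^ ((1:ℝ) - β))
        + (if j = v then γ * ω * πh v / ((deg w u + ω) ^ β * deg w v ^ ((1:ℝ) - β)) else 0) := by
    intro j
    by_cases hjv : j = v
    · subst hjv
      rw [hw', hd'u, hd'j j (Ne.symm huv)]
      simp [h0]
    · have hw'uj : w' u j = w u j := by
        rw [hw']
        have : ¬ ((u = u ∧ j = v) ∨ (u = v ∧ j = u)) := by
          rintro (⟨_, h⟩ | ⟨h, _⟩)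
          · exact hjv h
          · exact huv h
        rw [if_neg this]
      rw [hw'uj]
      by_cases hju : j = u
      · subst hju
        simp [hdiag, hjv]
      · rw [hd'u, hd'j j hju]
        simp [hjv]
  have key : ∑ j, γ * w' u j * πh j / (d' u ^ β * d' j ^ ((1:ℝ) - β))
      = (deg w u ^ β / (deg w u + ω) ^ β) *
          ∑ j, γ * w u j * πh j / (deg w u ^ β * deg w j ^ ((1:ℝ) - β))
        + γ * ω * πh v / ((deg w u + ω) ^ β * deg w v ^ ((1:ℝ) - β)) := by
    rw [Finset.sum_congr rfl (fun j _ => hsum j), Finset.sum_add_distrib,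
      Finset.sum_ite_eq' Finset.univ v, Finset.mul_sum]
    simp only [Finset.mem_univ, if_true]
    congr 1
    apply Finset.sum_congr rfl
    intro j _
    have hpj : (0:ℝ) < deg w j ^ ((1:ℝ) - β) := Real.rpow_pos_of_pos (hd j) _
    field_simp
  rw [key, hr'u]
  have hS : ∑ j, γ * w u j * πh j / (deg w u ^ β * deg w j ^ ((1:ℝ) - β))
      = πh u + γ₀ * r u - γ₀ * x u := by linarith [hinv]
  rw [hS]
  field_simp
  ring
end

section
/- Edge-deletion update. Let u ≠ v be nodes with w(u,v) = ω > 0, and assume d(u) − ω > 0. Let w′ be the symmetric weight matrix equal to w except w′(u,v) = w′(v,u) = 0. Define the modified degree function d′ by d′(u) = d(u) − ω and d′(j) = d(j) for j ≠ u (only u's degree is updated at this step). Suppose the invariant property holds at node u with respect to (w, d). Define r′(u) = r(u) − γ·ω·π̂(v)/(γ₀·(d(u)−ω)^β·d(v)^{1−β}) + (π̂(u) + γ₀·r(u) − γ₀·x(u))·(d(u)^β − (d(u)−ω)^β)/(γ₀·(d(u)−ω)^β), with r′(j) = r(j) for j ≠ u and π̂ unchanged. Then the invariant property holds at node u with respect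 to (w′, d′) for (π̂, r′, x). -/
open Finset

/-- Edge-deletion update: after deleting the edge `(u,v)` of weight `ω`
(updating only node `u`'s degree) and adjusting the residual at `u` as stated,
the invariant property is restored at node `u`. -/
theorem edge_deletion_update {n : ℕ} (hn : 1 ≤ n) (w : Fin n → Fin n → ℝ)
    (hsym : ∀ i j, w i j = w j i) (hnn : ∀ i j, 0 ≤ w i j)
    (hdiag : ∀ i, w i i = 0) (hd : ∀ i, 0 < deg w i)
    (β γ₀ γ : ℝ) (hβ0 : 0 ≤ β) (hβ1 : β ≤ 1) (hγ₀ : γ₀ ≠ 0)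
    (πh r x : Fin n → ℝ)
    (u v : Fin n) (huv : u ≠ v) (ω : ℝ) (hω : 0 < ω) (hwuv : w u v = ω)
    (hdu : 0 < deg w u - ω)
    (w' : Fin n → Fin n → ℝ)
    (hw' : ∀ i j, w' i j = if (i = u ∧ j = v) ∨ (i = v ∧ j = u) then 0 else w i j)
    (d' : Fin n → ℝ) (hd'u : d' u = deg w u - ω)
    (hd'j : ∀ j, j ≠ u → d' j = deg w j)
    (hinv : invariantAt w (deg w) β γ₀ γ πh r x u)
    (r' : Fin n → ℝ)
    (hr'u : r' u = r u
        - γ * ω * πh v / (γ₀ * (deg w u - ω) ^ β * deg w v ^ ((1 : ℝ) - β))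
        + (πh u + γ₀ * r u - γ₀ * x u) * (deg w u ^ β - (deg w u - ω) ^ β)
            / (γ₀ * (deg w u - ω) ^ β))
    (hr'j : ∀ j, j ≠ u → r' j = r j) :
    invariantAt w' d' β γ₀ γ πh r' x u := by
  have he : ((deg w u - ω) ^ β : ℝ) ≠ 0 := (Real.rpow_pos_of_pos hdu β).ne'
  have hdub : ((deg w u) ^ β : ℝ) ≠ 0 := (Real.rpow_pos_of_pos (hd u) β).ne'
  have hdv : ((deg w v) ^ ((1:ℝ) - β) : ℝ) ≠ 0 := (Real.rpow_pos_of_pos (hd v) _).ne'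
  unfold invariantAt at hinv ⊢
  have hsum : ∑ j, γ * w' u j * πh j / (d' u ^ β * d' j ^ ((1:ℝ) - β))
      = (∑ j, γ * w u j * πh j / (deg w u ^ β * deg w j ^ ((1:ℝ) - β)))
          * (deg w u ^ β / (deg w u - ω) ^ β)
        - γ * ω * πh v / ((deg w u - ω) ^ β * deg w v ^ ((1:ℝ) - β)) := by
    rw [Finset.sum_mul]
    have hstep : ∀ j : Fin n,
        γ * w' u j * πh j / (d' u ^ β * d' j ^ ((1:ℝ) - β))
        = γ * w u j * πh j / (deg w u ^ β * deg w j ^ ((1:ℝ) - β))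
            * (deg w u ^ β / (deg w u - ω) ^ β)
          - (if j = v then γ * ω * πh v / ((deg w u - ω) ^ β * deg w v ^ ((1:ℝ) - β))
             else 0) := by
      intro j
      by_cases hj : j = v
      · rw [hj]
        rw [hw', hd'j v (Ne.symm huv), hwuv, if_pos (Or.inl ⟨rfl, rfl⟩), if_pos rfl]
        field_simp
        ring
      · rw [hw', if_neg (by simp [hj, huv]), if_neg hj]
        by_cases hju : j = u
        · subst hju
          rw [hdiag]
          simp
        · rw [hd'j j hju, hd'u]
          have hdj : ((deg w j) ^ ((1:ℝ) - β) : ℝ) ≠ 0 :=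
            (Real.rpow_pos_of_pos (hd j) _).ne'
          field_simp
          ring
    rw [Finset.sum_congr rfl (fun j _ => hstep j), Finset.sum_sub_distrib]
    simp
  have hS : ∑ j, γ * w u j * πh j / (deg w u ^ β * deg w j ^ ((1:ℝ) - β))
      = πh u + γ₀ * r u - γ₀ * x u := by linarith [hinv]
  rw [hsum, hS, hr'u]
  field_simp
  ring
end

section
/- Estimate-scaling update. Let u be a node whose degree value is to change from d(u) to a new value d′ > 0, and define the degree function δ′ by δ′(u) = d′ and δ′(j) = d(j) for j ≠ u. Define π̂′(u) = π̂(u)·d′^{1−β}/d(u)^{1−β}, r′(u) = r(u) + π̂′(u)·(d(u)^{1−β} − d′^{1−β})/(γ₀·d′^{1−β}), with π̂′(j) = π̂(j) and r′(j) = r(j) for j ≠ u. Then: (i) π̂′(u) + γ₀·r′(u) = π̂(u) + γ₀·r(u); (ii) π̂′(u)/d′^{1−β} = π̂(u)/d(u)^{1−β}; and (iii) for every node i ≠ u, the invariant property holds at i with respect to (w, δ′) for (π̂′, r′, x) if and only if the invariant property holds at i with respect to (w, d) for (π̂, r, x). -/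
open Finset

/-- Estimate-scaling update: when node `u`'s degree value changes from `d(u)`
to `d'`, rescaling `πh(u)` and compensating in `r(u)` (i) keeps
`πh(u) + γ₀ r(u)` unchanged, (ii) keeps `πh(u)/δ(u)^{1-β}` unchanged, and
(iii) preserves the invariant property at every node `i ≠ u`. -/
theorem estimate_scaling_update {n : ℕ} (hn : 1 ≤ n) (w : Fin n → Fin n → ℝ)
    (hsym : ∀ i j, w i j = w j i) (hnn : ∀ i j, 0 ≤ w i j)
    (hdiag : ∀ i, w i i = 0) (hd : ∀ i, 0 < deg w i)
    (β γ₀ γ : ℝ) (hβ0 : 0 ≤ β) (hβ1 : β ≤ 1) (hγ₀ : γ₀ ≠ 0)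
    (πh r x : Fin n → ℝ)
    (u : Fin n) (d' : ℝ) (hd' : 0 < d')
    (δ' : Fin n → ℝ) (hδ'u : δ' u = d') (hδ'j : ∀ j, j ≠ u → δ' j = deg w j)
    (πh' r' : Fin n → ℝ)
    (hπ'u : πh' u = πh u * d' ^ ((1 : ℝ) - β) / deg w u ^ ((1 : ℝ) - β))
    (hπ'j : ∀ j, j ≠ u → πh' j = πh j)
    (hr'u : r' u = r u
        + πh' u * (deg w u ^ ((1 : ℝ) - β) - d' ^ ((1 : ℝ) - β))
            / (γ₀ * d' ^ ((1 : ℝ) - β)))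
    (hr'j : ∀ j, j ≠ u → r' j = r j) :
    (πh' u + γ₀ * r' u = πh u + γ₀ * r u) ∧
    (πh' u / d' ^ ((1 : ℝ) - β) = πh u / deg w u ^ ((1 : ℝ) - β)) ∧
    (∀ i, i ≠ u →
      (invariantAt w δ' β γ₀ γ πh' r' x i ↔
        invariantAt w (deg w) β γ₀ γ πh r x i)) := by
  have hdu : deg w u ^ ((1 : ℝ) - β) ≠ 0 :=
    ne_of_gt (Real.rpow_pos_of_pos (hd u) _)
  have hd'p : d' ^ ((1 : ℝ) - β) ≠ 0 :=
    ne_of_gt (Real.rpow_pos_of_pos hd' _)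
  refine ⟨?_, ?_, ?_⟩
  · rw [hr'u, hπ'u]
    field_simp
    ring
  · rw [hπ'u]
    field_simp
  · intro i hi
    have hL : πh' i = πh i := hπ'j i hi
    have hR : r' i = r i := hr'j i hi
    have hsum : (∑ j, γ * w i j * πh' j / (δ' i ^ β * δ' j ^ ((1 : ℝ) - β)))
        = ∑ j, γ * w i j * πh j / (deg w i ^ β * deg w j ^ ((1 : ℝ) - β)) := by
      apply Finset.sum_congr rfl
      intro j _
      by_cases hj : j = u
      · subst hj
        rw [hδ'u, hδ'j i hi, hπ'u]
        have h1 : deg w i ^ β ≠ 0 := ne_of_gt (Real.rpow_pos_of_pos (hd i) β)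
        rw [mul_div_assoc', div_div,
          div_eq_div_iff (mul_ne_zero hdu (mul_ne_zero h1 hd'p)) (mul_ne_zero h1 hdu)]
        ring
      · rw [hδ'j i hi, hδ'j j hj, hπ'j j hj]
    unfold invariantAt
    rw [hL, hR, hsum]
end

section
/- Batch update correctness. Let w and w′ be two symmetric weight matrices with nonnegative entries, zero diagonals, and strictly positive degree functions d and d′ respectively, and let V_A = { u : ∃ j, w(u,j) ≠ w′(u,j) } be the set of affected nodes. Suppose the invariant property holds at every node with respect to (w, d) for (π̂, r, x). Define the batch update in two phases. Phase 1 (estimate scaling): for u ∈ V_A set π̂₁(u) = π̂(u)·d′(u)^{1−β}/d(u)^{1−β} and r₁(u) = r(u) + π̂₁(u)·(d(u)^{1−β} − d′(u)^{1−β})/(γ₀·d′(u)^{1−β}); for u ∉ V_A set π̂₁(u) = π̂(u), r₁(u) = r(u). Phase 2 (residual increment): for u ∈ V_A set r₂(u) = r₁(u) + (1/γ₀)·[ (π̂₁(u) + γ₀·r₁(u) − γ₀·x(u))·(d(u)^β − d′(u)^β)/d′(u)^β + Σ_v γ·(w′(u,v) − w(u,v))·π̂₁(v)/(d′(u)^β·d′(v)^{1−β})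 ] (the signed sum over v encodes the contributions of added neighbors minus deleted neighbors); for u ∉ V_A set r₂(u) = r₁(u). Then the invariant property holds at every node with respect to (w′, d′) for (π̂₁, r₂, x). -/
open Finset

/-- Batch update correctness: starting from the invariant property with respect
to `(w, d)`, the two-phase batch update (Phase 1: estimate scaling on the
affected nodes `V_A = {u : ∃ j, w u j ≠ w' u j}`; Phase 2: residual increment on
the affected nodes) restores the invariant property at every node with respect
to the new weights `(w', d')`. -/
theorem batch_update_correctness {n : ℕ} (hn : 1 ≤ n)
    (w w' : Fin n → Fin n → ℝ)
    (hsym : ∀ i j, w i j = w j i) (hnn : ∀ i j, 0 ≤ w i j)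
    (hdiag : ∀ i, w i i = 0) (hd : ∀ i, 0 < deg w i)
    (hsym' : ∀ i j, w' i j = w' j i) (hnn' : ∀ i j, 0 ≤ w' i j)
    (hdiag' : ∀ i, w' i i = 0) (hd' : ∀ i, 0 < deg w' i)
    (β γ₀ γ : ℝ) (hβ0 : 0 ≤ β) (hβ1 : β ≤ 1) (hγ₀ : γ₀ ≠ 0)
    (πh r x : Fin n → ℝ)
    (hinv : ∀ i, invariantAt w (deg w) β γ₀ γ πh r x i)
    (πh₁ r₁ r₂ : Fin n → ℝ)
    -- Phase 1 (estimate scaling) on affected nodes: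
    (hπ₁A : ∀ u, (∃ j, w u j ≠ w' u j) →
      πh₁ u = πh u * deg w' u ^ ((1 : ℝ) - β) / deg w u ^ ((1 : ℝ) - β))
    (hπ₁B : ∀ u, ¬ (∃ j, w u j ≠ w' u j) → πh₁ u = πh u)
    (hr₁A : ∀ u, (∃ j, w u j ≠ w' u j) →
      r₁ u = r u + πh₁ u * (deg w u ^ ((1 : ℝ) - β) - deg w' u ^ ((1 : ℝ) - β))
          / (γ₀ * deg w' u ^ ((1 : ℝ) - β)))
    (hr₁B : ∀ u, ¬ (∃ j, w u j ≠ w' u j) → r₁ u = r u)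
    -- Phase 2 (residual increment) on affected nodes:
    (hr₂A : ∀ u, (∃ j, w u j ≠ w' u j) →
      r₂ u = r₁ u + (1 / γ₀) *
        ((πh₁ u + γ₀ * r₁ u - γ₀ * x u) * (deg w u ^ β - deg w' u ^ β)
            / deg w' u ^ β
          + ∑ v, γ * (w' u v - w u v) * πh₁ v
              / (deg w' u ^ β * deg w' v ^ ((1 : ℝ) - β))))
    (hr₂B : ∀ u, ¬ (∃ j, w u j ≠ w' u j) → r₂ u = r₁ u) :
    ∀ i, invariantAt w' (deg w') β γ₀ γ πh₁ r₂ x i := by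
  have hkey : ∀ j, πh₁ j / deg w' j ^ ((1:ℝ) - β) = πh j / deg w j ^ ((1:ℝ) - β) := by
    intro j
    by_cases hj : ∃ k, w j k ≠ w' j k
    · have hA : (0:ℝ) < deg w j ^ ((1:ℝ) - β) := Real.rpow_pos_of_pos (hd j) _
      have hA' : (0:ℝ) < deg w' j ^ ((1:ℝ) - β) := Real.rpow_pos_of_pos (hd' j) _
      rw [hπ₁A j hj]
      field_simp
    · have hdeq : deg w j = deg w' j := by
        push_neg at hj
        unfold deg
        exact Finset.sum_congr rfl fun k _ => hj k
      rw [hπ₁B j hj, hdeq]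
  intro i
  unfold invariantAt
  by_cases h : ∃ k, w i k ≠ w' i k
  · have hA : (0:ℝ) < deg w i ^ ((1:ℝ) - β) := Real.rpow_pos_of_pos (hd i) _
    have hA' : (0:ℝ) < deg w' i ^ ((1:ℝ) - β) := Real.rpow_pos_of_pos (hd' i) _
    have hB : (0:ℝ) < deg w i ^ β := Real.rpow_pos_of_pos (hd i) _
    have hB' : (0:ℝ) < deg w' i ^ β := Real.rpow_pos_of_pos (hd' i) _
    have hBne := ne_of_gt hB
    have hB'ne := ne_of_gt hB'
    have hS1 : πh₁ i + γ₀ * r₁ i = πh i + γ₀ * r i := by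
      rw [hr₁A i h, hπ₁A i h]
      field_simp
      ring
    have hold := hinv i
    unfold invariantAt at hold
    have hsum_old : ∑ j, γ * w i j * πh j / (deg w i ^ β * deg w j ^ ((1:ℝ) - β))
        = (∑ j, γ * w i j * (πh₁ j / deg w' j ^ ((1:ℝ) - β))) / deg w i ^ β := by
      rw [Finset.sum_div]
      refine Finset.sum_congr rfl fun j _ => ?_
      rw [hkey j]
      ring
    have hs : πh₁ i + γ₀ * r₁ i
        = γ₀ * x i + (∑ j, γ * w i j * (πh₁ j / deg w' j ^ ((1:ℝ) - β))) / deg w i ^ β := by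
      rw [hS1, hold, hsum_old]
    have hsum2 : ∑ v, γ * (w' i v - w i v) * πh₁ v / (deg w' i ^ β * deg w' v ^ ((1:ℝ) - β))
        = ((∑ j, γ * w' i j * (πh₁ j / deg w' j ^ ((1:ℝ) - β)))
           - (∑ j, γ * w i j * (πh₁ j / deg w' j ^ ((1:ℝ) - β)))) / deg w' i ^ β := by
      rw [← Finset.sum_sub_distrib, Finset.sum_div]
      refine Finset.sum_congr rfl fun v _ => ?_
      ring
    have hsumgoal : ∑ j, γ * w' i j * πh₁ j / (deg w' i ^ β * deg w' j ^ ((1:ℝ) - β))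
        = (∑ j, γ * w' i j * (πh₁ j / deg w' j ^ ((1:ℝ) - β))) / deg w' i ^ β := by
      rw [Finset.sum_div]
      exact Finset.sum_congr rfl fun j _ => by ring
    rw [hsumgoal, hr₂A i h, hsum2]
    set T := ∑ j, γ * w i j * (πh₁ j / deg w' j ^ ((1:ℝ) - β)) with hT
    set T' := ∑ j, γ * w' i j * (πh₁ j / deg w' j ^ ((1:ℝ) - β)) with hT'
    have hr1 : r₁ i = (γ₀ * x i + T / deg w i ^ β - πh₁ i) / γ₀ := by
      field_simp at hs ⊢
      linarith [hs]
    rw [hr1]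
    field_simp
    ring
  · have hweq : ∀ k, w i k = w' i k := by push_neg at h; exact h
    have hdeq : deg w i = deg w' i := by
      unfold deg
      exact Finset.sum_congr rfl fun k _ => hweq k
    rw [hr₂B i h, hr₁B i h, hπ₁B i h]
    have hold := hinv i
    unfold invariantAt at hold
    rw [hold]
    congr 1
    refine Finset.sum_congr rfl fun j _ => ?_
    rw [← hweq j, ← hdeq]
    have h1 : γ * w i j * πh j / (deg w i ^ β * deg w j ^ ((1:ℝ) - β))
        = γ * w i j / deg w i ^ β * (πh j / deg w j ^ ((1:ℝ) - β)) := by ring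
    have h2 : γ * w i j * πh₁ j / (deg w i ^ β * deg w' j ^ ((1:ℝ) - β))
        = γ * w i j / deg w i ^ β * (πh₁ j / deg w' j ^ ((1:ℝ) - β)) := by ring
    rw [h1, h2, hkey j]
end
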